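/- arXiv:2202.06917 — 5 statements merged into one kernel-verified Lean document; each statement's English description precedes it below -/
import Mathlib

section
/- Let Ω ⊂ ℝⁿ be a connected open set, y₀ ∈ ℝⁿ, and f : Ω → ℝⁿ a continuous map such that f⁻¹{y₀} is totally disconnected. Then for every x ∈ f⁻¹{y₀} there exists ε > 0 such that the connected component of f⁻¹(B(y₀, ε)) containing x has compact closure contained in Ω. -/
/-!
Fix a closed ball `S = closedBall x r ⊆ Ω` and let `Cᵢ` be the component of `x` in
`S ∩ f⁻¹(closedBall y₀ (1/(i+1)))`. The `Cᵢ` form a decreasing sequence of compact connected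
sets, so their intersection is connected; it lies in the totally disconnected fibre, hence
equals `{x}`, and by compactness some `Cᵢ` already lies in the open ball `ball x r`. With
`ε = 1/(i+1)`, the component `D` of `x` in the open set `Ω ∩ f⁻¹(B(y₀, ε))` is open, and the
component of `x` in `D ∩ ball x r` is contained in `Cᵢ` together with its closure; so it is
relatively clopen in `D`, hence all of `D`. Thus `closure D ⊆ closedBall x r ⊆ Ω`.
-/

open Metric Set Topology

section Topology

variable {X : Type*} [TopologicalSpace X]

theorem IsTotallyDisconnected.subset {s t : Set X} (ht : IsTotallyDisconnected t) (hst : s ⊆ t) :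
    IsTotallyDisconnected s :=
  fun u hus => ht u (hus.trans hst)

theorem IsClosed.connectedComponentIn {K : Set X} (hK : IsClosed K) (x : X) :
    IsClosed (connectedComponentIn K x) := by
  by_cases hx : x ∈ K
  · refine closure_subset_iff_isClosed.1 <|
      isPreconnected_connectedComponentIn.closure.subset_connectedComponentIn
        (subset_closure (mem_connectedComponentIn hx)) ?_
    exact hK.closure_subset_iff.2 (connectedComponentIn_subset K x)
  · rw [connectedComponentIn_eq_empty hx]
    exact isClosed_empty

theorem IsCompact.connectedComponentIn [T2Space X] {K : Set X} (hK : IsCompact K) (x : X) :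
    IsCompact (connectedComponentIn K x) :=
  hK.of_isClosed_subset (hK.isClosed.connectedComponentIn x) (connectedComponentIn_subset K x)

theorem isPreconnected_iInter_of_directed [T2Space X] {ι : Type*} [Nonempty ι]
    {V : ι → Set X} (hV : Directed (· ⊇ ·) V) (hcpt : ∀ i, IsCompact (V i))
    (hconn : ∀ i, IsPreconnected (V i)) : IsPreconnected (⋂ i, V i) := by
  have hs : IsCompact (⋂ i, V i) :=
    (hcpt (Classical.arbitrary ι)).of_isClosed_subset
      (isClosed_iInter fun i => (hcpt i).isClosed) (iInter_subset _ _)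
  rw [isPreconnected_iff_subset_of_disjoint_closed]
  intro A B hA hB hsAB hAB
  obtain ⟨U, W, hU, hW, hAU, hBW, hUW⟩ := SeparatedNhds.of_isCompact_isCompact
    (hs.inter_right hA) (hs.inter_right hB)
    (by rwa [disjoint_iff_inter_eq_empty, ← inter_inter_distrib_left])
  have hsUW : ∀ z ∈ ⋂ i, V i, z ∈ U ∨ z ∈ W := fun z hz =>
    (hsAB hz).imp (fun h => hAU ⟨hz, h⟩) (fun h => hBW ⟨hz, h⟩)
  obtain ⟨i, hi⟩ := exists_subset_nhds_of_isCompact hV hcpt fun z hz =>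
    (hU.union hW).mem_nhds (hsUW z hz)
  have hsi : (⋂ i, V i) ⊆ V i := iInter_subset _ i
  rcases (hconn i).subset_or_subset hU hW hUW hi with hiU | hiW
  · refine Or.inl fun z hz => (hsAB hz).resolve_right fun hzB => ?_
    exact disjoint_left.1 hUW (hiU (hsi hz)) (hBW ⟨hz, hzB⟩)
  · refine Or.inr fun z hz => (hsAB hz).resolve_left fun hzA => ?_
    exact disjoint_left.1 hUW (hAU ⟨hz, hzA⟩) (hiW (hsi hz))

theorem exists_connectedComponentIn_subset_of_directed [T2Space X] {ι : Type*} [Nonempty ι]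
    {K : ι → Set X} (hK : Directed (· ⊇ ·) K) (hcpt : ∀ i, IsCompact (K i))
    (htd : IsTotallyDisconnected (⋂ i, K i)) {x : X} (hx : ∀ i, x ∈ K i) {U : Set X}
    (hU : U ∈ 𝓝 x) : ∃ i, connectedComponentIn (K i) x ⊆ U := by
  have hC : Directed (· ⊇ ·) fun i => connectedComponentIn (K i) x :=
    fun i j => (hK i j).imp fun _ h =>
      ⟨connectedComponentIn_mono x h.1, connectedComponentIn_mono x h.2⟩
  have hCsub : (⋂ i, connectedComponentIn (K i) x) ⊆ ⋂ i, K i :=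
    iInter_mono fun i => connectedComponentIn_subset _ _
  have hsingleton : ∀ z ∈ ⋂ i, connectedComponentIn (K i) x, z = x := fun z hz =>
    htd _ hCsub (isPreconnected_iInter_of_directed hC (fun i => (hcpt i).connectedComponentIn x)
      fun _ => isPreconnected_connectedComponentIn) hz
      (mem_iInter.2 fun i => mem_connectedComponentIn (hx i))
  exact exists_subset_nhds_of_isCompact hC (fun i => (hcpt i).connectedComponentIn x)
    fun z hz => hsingleton z hz ▸ hU

theorem subset_of_closure_connectedComponentIn_inter_subset
    [LocallyConnectedSpace X] {D B : Set X} (hD : IsPreconnected D) (hDo : IsOpen D)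
    (hBo : IsOpen B) {x : X} (hx : x ∈ D ∩ B)
    (hcl : closure (connectedComponentIn (D ∩ B) x) ⊆ B) : D ⊆ B := by
  set C := connectedComponentIn (D ∩ B) x
  have hCD : C ⊆ D := (connectedComponentIn_subset _ _).trans inter_subset_left
  have hclC : closure C ∩ D ⊆ C :=
    (isPreconnected_connectedComponentIn.subset_closure (subset_inter subset_closure hCD)
      inter_subset_left).subset_connectedComponentIn
      ⟨subset_closure (mem_connectedComponentIn hx), hx.1⟩
      fun z hz => ⟨hz.2, hcl hz.1⟩
  have hDC : D ⊆ C := hD.subset_left_of_subset_union (hDo.inter hBo).connectedComponentIn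
    isClosed_closure.isOpen_compl
    (disjoint_compl_right.mono_right (compl_subset_compl.2 subset_closure))
    (fun z hz => (em (z ∈ closure C)).imp (fun h => hclC ⟨h, hz⟩) id)
    ⟨x, hx.1, mem_connectedComponentIn hx⟩
  exact hDC.trans ((connectedComponentIn_subset _ _).trans inter_subset_right)

theorem connectedComponentIn_subset_of_inter_subset [LocallyConnectedSpace X]
    {G B K : Set X} (hG : IsOpen G) (hB : IsOpen B) (hK : IsClosed K) (hGBK : G ∩ B ⊆ K)
    {x : X} (hx : x ∈ G ∩ B) (hKB : connectedComponentIn K x ⊆ B) :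
    connectedComponentIn G x ⊆ B := by
  have hxD : x ∈ connectedComponentIn G x := mem_connectedComponentIn hx.1
  refine subset_of_closure_connectedComponentIn_inter_subset isPreconnected_connectedComponentIn
    hG.connectedComponentIn hB ⟨hxD, hx.2⟩ ?_
  refine ((hK.connectedComponentIn x).closure_subset_iff.2 ?_).trans hKB
  exact connectedComponentIn_mono x <|
    (inter_subset_inter_left B (connectedComponentIn_subset G x)).trans hGBK

end Topology

theorem exists_connectedComponentIn_inter_preimage_closedBall_subset {X Y : Type*}
    [TopologicalSpace X] [T2Space X] [MetricSpace Y] {S : Set X} (hS : IsCompact S)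
    {f : X → Y} (hf : ContinuousOn f S) {y : Y} (htd : IsTotallyDisconnected (S ∩ f ⁻¹' {y}))
    {x : X} (hxS : x ∈ S) (hfx : f x = y) {U : Set X} (hU : U ∈ 𝓝 x) :
    ∃ ε > (0 : ℝ), connectedComponentIn (S ∩ f ⁻¹' closedBall y ε) x ⊆ U := by
  set K : ℕ → Set X := fun i => S ∩ f ⁻¹' closedBall y (1 / (i + 1))
  have hKcpt : ∀ i, IsCompact (K i) := fun i =>
    hS.of_isClosed_subset (hf.preimage_isClosed_of_isClosed hS.isClosed isClosed_closedBall)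
      inter_subset_left
  have hKanti : Antitone K := fun i j hij =>
    inter_subset_inter_right _ (preimage_mono (closedBall_subset_closedBall
      (Nat.one_div_le_one_div hij)))
  have hxK : ∀ i, x ∈ K i := fun i => by
    refine ⟨hxS, ?_⟩
    rw [mem_preimage, hfx]
    exact mem_closedBall_self (by positivity)
  have hKfib : (⋂ i, K i) ⊆ S ∩ f ⁻¹' {y} := fun z hz => by
    refine ⟨(mem_iInter.1 hz 0).1, ?_⟩
    rw [mem_preimage, ← biInter_basis_nhds nhds_basis_closedBall_inv_nat_succ]
    simpa using fun i => (mem_iInter.1 hz i).2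
  obtain ⟨i, hi⟩ := exists_connectedComponentIn_subset_of_directed hKanti.directed_ge hKcpt
    (htd.subset hKfib) hxK hU
  exact ⟨1 / (i + 1), by positivity, hi⟩

theorem component_compactly_contained_general (n : ℕ)
    (Ω : Set (EuclideanSpace ℝ (Fin n))) (hΩo : IsOpen Ω)
    (y₀ : EuclideanSpace ℝ (Fin n))
    (f : EuclideanSpace ℝ (Fin n) → EuclideanSpace ℝ (Fin n))
    (hf : ContinuousOn f Ω)
    (hfib : IsTotallyDisconnected (Ω ∩ f ⁻¹' {y₀})) :
    ∀ x ∈ Ω ∩ f ⁻¹' {y₀}, ∃ ε > (0:ℝ),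
      IsCompact (closure (connectedComponentIn (Ω ∩ f ⁻¹' ball y₀ ε) x)) ∧
      closure (connectedComponentIn (Ω ∩ f ⁻¹' ball y₀ ε) x) ⊆ Ω := by
  rintro x ⟨hxΩ, hfx : f x = y₀⟩
  obtain ⟨r, hr, hrΩ⟩ := nhds_basis_closedBall.mem_iff.1 (hΩo.mem_nhds hxΩ)
  have hfr : ContinuousOn f (closedBall x r) := hf.mono hrΩ
  obtain ⟨ε, hε, hεr⟩ := exists_connectedComponentIn_inter_preimage_closedBall_subset
    (isCompact_closedBall x r) hfr (hfib.subset (inter_subset_inter_left _ hrΩ))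
    (mem_closedBall_self hr.le) hfx (ball_mem_nhds x hr)
  have hxε : x ∈ Ω ∩ f ⁻¹' ball y₀ ε := by
    refine ⟨hxΩ, ?_⟩
    rw [mem_preimage, hfx]
    exact mem_ball_self hε
  have hD : connectedComponentIn (Ω ∩ f ⁻¹' ball y₀ ε) x ⊆ ball x r :=
    connectedComponentIn_subset_of_inter_subset (hf.isOpen_inter_preimage hΩo isOpen_ball)
      isOpen_ball (hfr.preimage_isClosed_of_isClosed isClosed_closedBall isClosed_closedBall)
      (fun z hz => ⟨ball_subset_closedBall hz.2, preimage_mono ball_subset_closedBall hz.1.2⟩)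
      ⟨hxε, mem_ball_self hr⟩ hεr
  have hclD := (closure_mono hD).trans closure_ball_subset_closedBall
  exact ⟨ε, hε, (isCompact_closedBall x r).of_isClosed_subset isClosed_closure hclD,
    hclD.trans hrΩ⟩

/-- Let `Ω ⊂ ℝⁿ` be a connected open set, `y₀ ∈ ℝⁿ`, and `f : Ω → ℝⁿ` continuous with
`f⁻¹{y₀}` totally disconnected. Then for every `x ∈ f⁻¹{y₀}` there is `ε > 0` such that
the connected component of `f⁻¹(B(y₀, ε))` containing `x` has compact closure
contained in `Ω`. -/
theorem component_compactly_contained (n : ℕ)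
    (Ω : Set (EuclideanSpace ℝ (Fin n))) (hΩo : IsOpen Ω) (hΩc : IsConnected Ω)
    (y₀ : EuclideanSpace ℝ (Fin n))
    (f : EuclideanSpace ℝ (Fin n) → EuclideanSpace ℝ (Fin n))
    (hf : ContinuousOn f Ω)
    (hfib : IsTotallyDisconnected (Ω ∩ f ⁻¹' {y₀})) :
    ∀ x ∈ Ω ∩ f ⁻¹' {y₀}, ∃ ε > (0:ℝ),
      IsCompact (closure (connectedComponentIn (Ω ∩ f ⁻¹' ball y₀ ε) x)) ∧
      closure (connectedComponentIn (Ω ∩ f ⁻¹' ball y₀ ε) x) ⊆ Ω :=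
  component_compactly_contained_general n Ω hΩo y₀ f hf hfib
end

section
/- Let Ω ⊂ ℝⁿ be a connected open set, y₀ ∈ ℝⁿ, and f : Ω → ℝⁿ continuous with f⁻¹{y₀} totally disconnected. Then for all distinct x₁, x₂ ∈ f⁻¹{y₀} there exists ε > 0 such that x₁ and x₂ lie in different connected components of f⁻¹(B(y₀, ε)). -/
/-!
Near `x₁` the fibre `F = Ω ∩ f⁻¹{y₀}` is locally compact and totally disconnected, so it has a
compact relatively open piece `K ∋ x₁` missing `x₂`. Writing `K = F ∩ S` with `S` open, the open set
`(Ω \ F) ∪ (Ω ∩ S)` meets `F` only in `K`; inside it `K` has an open neighbourhood `W` with compact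
closure, so the frontier of `W` misses `F`. Then `f` stays at distance `≥ ε > 0` from `y₀` on the
compact set `frontier W`, and no connected subset of `Ω ∩ f⁻¹(B(y₀, ε))` can join `x₁ ∈ W` to
`x₂ ∉ W`.
-/

open Metric Set Topology

section

variable {X : Type*} [TopologicalSpace X]

theorem exists_isCompact_isClopen_mem_notMem [LocallyCompactSpace X] [T2Space X]
    [TotallyDisconnectedSpace X] {x y : X} (hxy : x ≠ y) :
    ∃ V : Set X, IsCompact V ∧ IsClopen V ∧ x ∈ V ∧ y ∉ V := by
  obtain ⟨N, hN, hNy, hNc⟩ :=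
    LocallyCompactSpace.local_compact_nhds x {y}ᶜ (isOpen_compl_singleton.mem_nhds hxy)
  obtain ⟨V, hV, hxV, hVN⟩ := loc_compact_Haus_tot_disc_of_zero_dim.mem_nhds_iff.1 hN
  exact ⟨V, hNc.of_isClosed_subset hV.isClosed hVN, hV, hxV, fun hyV => hNy (hVN hyV) rfl⟩

theorem exists_isOpen_disjoint_frontier_of_isTotallyDisconnected [LocallyCompactSpace X]
    [T2Space X] {O F : Set X} (hO : IsOpen O) (hFO : F ⊆ O) (hOF : IsOpen (O \ F))
    (hF : IsTotallyDisconnected F) {x y : X} (hx : x ∈ F) (hy : y ∈ F) (hxy : x ≠ y) :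
    ∃ W, IsOpen W ∧ IsCompact (closure W) ∧ closure W ⊆ O ∧ x ∈ W ∧ y ∉ W ∧
      Disjoint (frontier W) F := by
  have hFlc : IsLocallyClosed F :=
    ⟨O, (O \ F)ᶜ, hO, hOF.isClosed_compl, by rw [← sdiff_eq, sdiff_sdiff_right_self,
      inter_eq_right.2 hFO]⟩
  have := hFlc.locallyCompactSpace
  have := totallyDisconnectedSpace_subtype_iff.2 hF
  obtain ⟨V, hVc, hV, hxV, hyV⟩ :=
    exists_isCompact_isClopen_mem_notMem (x := (⟨x, hx⟩ : F)) (y := ⟨y, hy⟩) (by simpa)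
  obtain ⟨S, hS, rfl⟩ := isOpen_induced_iff.1 hV.isOpen
  have hK : IsCompact (F ∩ S) := by
    simpa only [Subtype.image_preimage_coe] using hVc.image continuous_subtype_val
  obtain ⟨W, hW, hKW, hWU, hWc⟩ := exists_open_between_and_isCompact_closure hK
    (hOF.union (hO.inter hS)) fun z hz => Or.inr ⟨hFO hz.1, hz.2⟩
  have hWS : ∀ z ∈ F, z ∈ closure W → z ∈ S := fun z hzF hzW => by
    rcases hWU hzW with hz | hz
    exacts [(hz.2 hzF).elim, hz.2]
  refine ⟨W, hW, hWc, hWU.trans (union_subset sdiff_subset inter_subset_left), hKW ⟨hx, hxV⟩,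
    fun hyW => hyV (hWS y hy (subset_closure hyW)), disjoint_left.2 fun z hzW hzF => ?_⟩
  rw [hW.frontier_eq] at hzW
  exact hzW.2 (hKW ⟨hzF, hWS z hzF hzW.1⟩)

theorem IsCompact.exists_pos_disjoint_preimage_ball {Y : Type*} [MetricSpace Y]
    {K : Set X} (hK : IsCompact K) {f : X → Y} (hf : ContinuousOn f K) {y₀ : Y}
    (hy₀ : y₀ ∉ f '' K) : ∃ ε > 0, Disjoint K (f ⁻¹' ball y₀ ε) := by
  obtain ⟨ε, hε, hball⟩ :=
    Metric.mem_nhds_iff.1 ((hK.image_of_continuousOn hf).isClosed.isOpen_compl.mem_nhds hy₀)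
  exact ⟨ε, hε, disjoint_left.2 fun z hz hzb => (hball hzb) (mem_image_of_mem f hz)⟩

theorem notMem_connectedComponentIn_of_disjoint_frontier {W G : Set X} {x y : X}
    (hW : IsOpen W) (hx : x ∈ W) (hy : y ∉ W) (hWG : Disjoint (frontier W) G) :
    y ∉ connectedComponentIn G x := by
  intro hyC
  have hxG : x ∈ G := connectedComponentIn_nonempty_iff.1 ⟨y, hyC⟩
  have hG : G ⊆ W ∪ (closure W)ᶜ := fun z hzG => by
    by_cases hzW : z ∈ W
    · exact Or.inl hzW
    · exact Or.inr fun hzW' => disjoint_left.1 hWG (hW.frontier_eq ▸ ⟨hzW', hzW⟩) hzG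
  have hCW : connectedComponentIn G x ⊆ W :=
    isPreconnected_connectedComponentIn.subset_left_of_subset_union hW
      isClosed_closure.isOpen_compl (disjoint_compl_right.mono_right
        (compl_subset_compl.2 subset_closure)) ((connectedComponentIn_subset G x).trans hG)
      ⟨x, mem_connectedComponentIn hxG, hx⟩
  exact hy (hCW hyC)

theorem exists_pos_notMem_connectedComponentIn_preimage_ball [LocallyCompactSpace X]
    [T2Space X] {Y : Type*} [MetricSpace Y] {Ω : Set X} (hΩ : IsOpen Ω) {f : X → Y}
    (hf : ContinuousOn f Ω) {y₀ : Y} (hfib : IsTotallyDisconnected (Ω ∩ f ⁻¹' {y₀}))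
    {x₁ x₂ : X} (hx₁ : x₁ ∈ Ω ∩ f ⁻¹' {y₀}) (hx₂ : x₂ ∈ Ω ∩ f ⁻¹' {y₀}) (hne : x₁ ≠ x₂) :
    ∃ ε > 0, x₂ ∉ connectedComponentIn (Ω ∩ f ⁻¹' ball y₀ ε) x₁ := by
  have hΩF : IsOpen (Ω \ (Ω ∩ f ⁻¹' {y₀})) := by
    rw [sdiff_self_inter, sdiff_eq, ← preimage_compl]
    exact hf.isOpen_inter_preimage hΩ isOpen_compl_singleton
  obtain ⟨W, hW, hWc, hWΩ, hx₁W, hx₂W, hWF⟩ :=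
    exists_isOpen_disjoint_frontier_of_isTotallyDisconnected hΩ inter_subset_left hΩF hfib
      hx₁ hx₂ hne
  have hfrΩ : frontier W ⊆ Ω := frontier_subset_closure.trans hWΩ
  obtain ⟨ε, hε, hεW⟩ := (hWc.of_isClosed_subset isClosed_frontier frontier_subset_closure)
    |>.exists_pos_disjoint_preimage_ball (hf.mono hfrΩ) fun ⟨z, hzW, hfz⟩ =>
      disjoint_left.1 hWF hzW ⟨hfrΩ hzW, hfz⟩
  exact ⟨ε, hε, notMem_connectedComponentIn_of_disjoint_frontier hW hx₁W hx₂W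
    (hεW.mono_right inter_subset_right)⟩

end

theorem distinct_points_in_different_components_general (n : ℕ)
    (Ω : Set (EuclideanSpace ℝ (Fin n))) (hΩo : IsOpen Ω)
    (y₀ : EuclideanSpace ℝ (Fin n))
    (f : EuclideanSpace ℝ (Fin n) → EuclideanSpace ℝ (Fin n))
    (hf : ContinuousOn f Ω)
    (hfib : IsTotallyDisconnected (Ω ∩ f ⁻¹' {y₀})) :
    ∀ x₁ ∈ Ω ∩ f ⁻¹' {y₀}, ∀ x₂ ∈ Ω ∩ f ⁻¹' {y₀}, x₁ ≠ x₂ →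
      ∃ ε > (0:ℝ), x₂ ∉ connectedComponentIn (Ω ∩ f ⁻¹' ball y₀ ε) x₁ :=
  fun _ hx₁ _ hx₂ hne =>
    exists_pos_notMem_connectedComponentIn_preimage_ball hΩo hf hfib hx₁ hx₂ hne

/-- Let `Ω ⊂ ℝⁿ` be a connected open set, `y₀ ∈ ℝⁿ`, and `f : Ω → ℝⁿ` continuous with
`f⁻¹{y₀}` totally disconnected. Then any two distinct points `x₁, x₂ ∈ f⁻¹{y₀}` lie in
different connected components of `f⁻¹(B(y₀, ε))` for some `ε > 0`. -/
theorem distinct_points_in_different_components (n : ℕ)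
    (Ω : Set (EuclideanSpace ℝ (Fin n))) (hΩo : IsOpen Ω) (hΩc : IsConnected Ω)
    (y₀ : EuclideanSpace ℝ (Fin n))
    (f : EuclideanSpace ℝ (Fin n) → EuclideanSpace ℝ (Fin n))
    (hf : ContinuousOn f Ω)
    (hfib : IsTotallyDisconnected (Ω ∩ f ⁻¹' {y₀})) :
    ∀ x₁ ∈ Ω ∩ f ⁻¹' {y₀}, ∀ x₂ ∈ Ω ∩ f ⁻¹' {y₀}, x₁ ≠ x₂ →
      ∃ ε > (0:ℝ), x₂ ∉ connectedComponentIn (Ω ∩ f ⁻¹' ball y₀ ε) x₁ :=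
  distinct_points_in_different_components_general n Ω hΩo y₀ f hf hfib
end

section
/- Let Ω ⊂ ℝⁿ be open and connected, K ≥ 1, and f ∈ W^{1,n}_loc(Ω, ℝⁿ). Suppose that for every y₀ ∈ ℝⁿ there exists Σ_{y₀} ∈ L¹_loc(Ω) with Σ_{y₀} ≥ 0 such that |Df(x)|ⁿ ≤ K J_f(x) + Σ_{y₀}(x) |f(x) − y₀|ⁿ for a.e. x ∈ Ω, and additionally that f is differentiable almost everywhere. Then f is K-quasiregular, i.e. |Df(x)|ⁿ ≤ K J_f(x) for a.e. x ∈ Ω. -/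
open MeasureTheory Metric Set

noncomputable section

/-- `Df` is a weak (distributional) differential of `f` on `Ω`. -/
def IsWeakFDerivOn {n : ℕ} (Ω : Set (EuclideanSpace ℝ (Fin n)))
    (f : EuclideanSpace ℝ (Fin n) → EuclideanSpace ℝ (Fin n))
    (Df : EuclideanSpace ℝ (Fin n) →
      EuclideanSpace ℝ (Fin n) →L[ℝ] EuclideanSpace ℝ (Fin n)) : Prop :=
  ∀ φ : EuclideanSpace ℝ (Fin n) → ℝ,
    ContDiff ℝ (⊤ : ℕ∞) φ → HasCompactSupport φ → tsupport φ ⊆ Ω →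
      ∀ v : EuclideanSpace ℝ (Fin n),
        ∫ x in Ω, φ x • Df x v = - ∫ x in Ω, (inner ℝ (gradient φ x) v : ℝ) • f x

/-- The determinant of a continuous linear endomorphism of `ℝⁿ` is bounded by the `n`-th
power of its operator norm. -/
lemma abs_det_le_pow_norm {n : ℕ}
    (A : EuclideanSpace ℝ (Fin n) →L[ℝ] EuclideanSpace ℝ (Fin n)) :
    |A.det| ≤ ‖A‖ ^ n := by
  set E := EuclideanSpace ℝ (Fin n)
  have hfin : Module.finrank ℝ E = n := finrank_euclideanSpace_fin
  have h1 : volume (A '' closedBall (0 : E) 1)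
      = ENNReal.ofReal |A.det| * volume (closedBall (0 : E) 1) :=
    Measure.addHaar_image_continuousLinearMap _ _ _
  have h2 : A '' closedBall (0 : E) 1 ⊆ closedBall (0 : E) ‖A‖ := by
    rintro - ⟨x, hx, rfl⟩
    simp only [mem_closedBall, dist_zero_right] at hx ⊢
    calc ‖A x‖ ≤ ‖A‖ * ‖x‖ := A.le_opNorm x
      _ ≤ ‖A‖ * 1 := mul_le_mul_of_nonneg_left hx (norm_nonneg A)
      _ = ‖A‖ := mul_one _
  have h3 : volume (closedBall (0 : E) ‖A‖)
      = ENNReal.ofReal (‖A‖ ^ n) * volume (closedBall (0 : E) 1) := by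
    rw [Measure.addHaar_closedBall' volume _ (norm_nonneg A), hfin]
  have hv0 : volume (closedBall (0 : E) 1) ≠ 0 :=
    (measure_closedBall_pos volume _ one_pos).ne'
  have hvt : volume (closedBall (0 : E) 1) ≠ ⊤ := measure_closedBall_lt_top.ne
  have h4 : ENNReal.ofReal |A.det| * volume (closedBall (0 : E) 1)
      ≤ ENNReal.ofReal (‖A‖ ^ n) * volume (closedBall (0 : E) 1) := by
    rw [← h1, ← h3]; exact measure_mono h2
  rw [ENNReal.mul_le_mul_iff_left hv0 hvt] at h4
  exact (ENNReal.ofReal_le_ofReal_iff (pow_nonneg (norm_nonneg A) n)).1 h4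

/-- Local version of the main theorem, on a small ball whose double is contained in `Ω`. -/
lemma key_local {n : ℕ} (hn : 1 ≤ n)
    (Ω : Set (EuclideanSpace ℝ (Fin n))) (K : ℝ)
    (f : EuclideanSpace ℝ (Fin n) → EuclideanSpace ℝ (Fin n))
    (Df : EuclideanSpace ℝ (Fin n) →
      EuclideanSpace ℝ (Fin n) →L[ℝ] EuclideanSpace ℝ (Fin n))
    (hDfloc : LocallyIntegrableOn (fun x => ‖Df x‖ ^ n) Ω volume)
    (hdiff : ∀ᵐ x ∂volume.restrict Ω, HasFDerivAt f (Df x) x)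
    (hall : ∀ y₀ : EuclideanSpace ℝ (Fin n),
      ∃ S : EuclideanSpace ℝ (Fin n) → ℝ, (∀ x, 0 ≤ S x) ∧
        LocallyIntegrableOn S Ω volume ∧
        ∀ᵐ x ∂volume.restrict Ω,
          ‖Df x‖ ^ n ≤ K * (Df x).det + S x * ‖f x - y₀‖ ^ n)
    (c : EuclideanSpace ℝ (Fin n)) (ρ : ℝ) (hρ : 0 < ρ)
    (hsub : closedBall c (2 * ρ) ⊆ Ω) :
    ∀ᵐ x ∂volume.restrict (ball c ρ), ‖Df x‖ ^ n ≤ K * (Df x).det := by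
  set k : Set (EuclideanSpace ℝ (Fin n)) := closedBall c (2 * ρ) with hk_def
  have hkcomp : IsCompact k := isCompact_closedBall _ _
  have hballρ : ball c ρ ⊆ k := ball_subset_closedBall.trans
    (closedBall_subset_closedBall (by linarith))
  have hballΩ : ball c ρ ⊆ Ω := hballρ.trans hsub
  have hDk : IntegrableOn (fun x => ‖Df x‖ ^ n) k volume :=
    hDfloc.integrableOn_compact_subset hsub hkcomp
  -- measurability of the Jacobian
  have hdetmeasΩ : AEStronglyMeasurable (fun x => (Df x).det) (volume.restrict Ω) := by
    have hm : Measurable fun x => (fderiv ℝ f x).det :=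
      ContinuousLinearMap.continuous_det.measurable.comp (measurable_fderiv ℝ f)
    refine hm.aestronglyMeasurable.congr ?_
    filter_upwards [hdiff] with x hx
    rw [hx.fderiv]
  have hdetmeask : AEStronglyMeasurable (fun x => (Df x).det) (volume.restrict k) :=
    hdetmeasΩ.mono_measure (Measure.restrict_mono hsub le_rfl)
  have hdetint : IntegrableOn (fun x => (Df x).det) k volume := by
    refine Integrable.mono' hDk hdetmeask (ae_of_all _ fun x => ?_)
    rw [Real.norm_eq_abs]
    exact abs_det_le_pow_norm _
  set g : EuclideanSpace ℝ (Fin n) → ℝ := fun x => ‖Df x‖ ^ n - K * (Df x).det with hg_def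
  have hgint : IntegrableOn g k volume := hDk.sub (hdetint.const_mul K)
  set g' : EuclideanSpace ℝ (Fin n) → ℝ := k.indicator g with hg'_def
  have hg' : Integrable g' volume :=
    (integrable_indicator_iff hkcomp.measurableSet).2 hgint
  have hg'loc : LocallyIntegrable g' volume := hg'.locallyIntegrable
  -- Lebesgue differentiation
  have hleb : ∀ᵐ x₀ ∂volume,
      Filter.Tendsto (fun r : ℝ => ⨍ y in closedBall x₀ r, g' y) (nhdsWithin 0 (Set.Ioi 0))
        (nhds (g' x₀)) := by
    filter_upwards [IsUnifLocDoublingMeasure.ae_tendsto_average (μ := volume) hg'loc 1]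
      with x₀ hx₀
    exact hx₀ (fun _ => x₀) id Filter.tendsto_id
      (by filter_upwards [self_mem_nhdsWithin] with r hr
          exact mem_closedBall_self (by simpa using le_of_lt hr))
  have hdiff' : ∀ᵐ x ∂volume.restrict (ball c ρ), HasFDerivAt f (Df x) x :=
    ae_restrict_of_ae_restrict_of_subset hballΩ hdiff
  filter_upwards [ae_restrict_of_ae hleb, hdiff', ae_restrict_mem measurableSet_ball]
    with x₀ hx₀leb hx₀diff hx₀mem
  obtain ⟨S, hS0, hSloc, hSineq⟩ := hall (f x₀)
  have hSk : IntegrableOn S k volume := hSloc.integrableOn_compact_subset hsub hkcomp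
  set S' : EuclideanSpace ℝ (Fin n) → ℝ := k.indicator S with hS'_def
  have hS' : Integrable S' volume := (integrable_indicator_iff hkcomp.measurableSet).2 hSk
  -- the measure of small balls tends to zero
  have hvt : volume (ball (0 : EuclideanSpace ℝ (Fin n)) 1) ≠ ⊤ := measure_ball_lt_top.ne
  have hvol : Filter.Tendsto (fun r : ℝ => volume (closedBall x₀ r))
      (nhdsWithin 0 (Set.Ioi 0)) (nhds 0) := by
    have h1 : Filter.Tendsto (fun r : ℝ => r ^ n) (nhdsWithin 0 (Set.Ioi 0)) (nhds 0) := by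
      have h := ((continuous_pow n).tendsto (0 : ℝ)).mono_left
        (nhdsWithin_le_nhds (s := Set.Ioi (0 : ℝ)))
      simpa [zero_pow (by omega : n ≠ 0)] using h
    have h2 : Filter.Tendsto (fun r : ℝ => ENNReal.ofReal (r ^ n) * volume (ball (0 : EuclideanSpace ℝ (Fin n)) 1))
        (nhdsWithin 0 (Set.Ioi 0)) (nhds 0) := by
      have h3 := ENNReal.Tendsto.mul_const (ENNReal.tendsto_ofReal h1) (Or.inr hvt)
      simpa using h3
    refine h2.congr' ?_
    filter_upwards [self_mem_nhdsWithin] with r hr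
    rw [Measure.addHaar_closedBall volume x₀ (le_of_lt hr), finrank_euclideanSpace_fin]
  have hI : Filter.Tendsto (fun r : ℝ => ∫ y in closedBall x₀ r, S' y)
      (nhdsWithin 0 (Set.Ioi 0)) (nhds 0) := hS'.tendsto_setIntegral_nhds_zero hvol
  -- differentiability bound
  obtain ⟨C₀, hC₀⟩ := hx₀diff.isBigO_sub.bound
  set C : ℝ := max C₀ 0 with hC_def
  have hCnn : 0 ≤ C := le_max_right _ _
  have hC : ∀ᶠ x in nhds x₀, ‖f x - f x₀‖ ≤ C * ‖x - x₀‖ := by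
    filter_upwards [hC₀] with x hx
    exact hx.trans (mul_le_mul_of_nonneg_right (le_max_left _ _) (norm_nonneg _))
  obtain ⟨δ, hδpos, hδ⟩ := Metric.eventually_nhds_iff.1 hC
  set ε : ℝ := min ρ (δ / 2) with hε_def
  have hεpos : 0 < ε := lt_min hρ (by linarith)
  set vt : ℝ := (volume (ball (0 : EuclideanSpace ℝ (Fin n)) 1)).toReal with hvt_def
  have hvtpos : 0 < vt := ENNReal.toReal_pos (measure_ball_pos volume _ one_pos).ne' hvt
  -- the main estimate on averages
  have hbound : ∀ r ∈ Set.Ioc (0 : ℝ) ε,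
      (⨍ y in closedBall x₀ r, g' y) ≤ (C ^ n / vt) * ∫ y in closedBall x₀ r, S' y := by
    intro r hr
    have hrρ : r ≤ ρ := hr.2.trans (min_le_left _ _)
    have hrδ : r < δ := lt_of_le_of_lt (hr.2.trans (min_le_right _ _)) (by linarith)
    have hcb_k : closedBall x₀ r ⊆ k := by
      intro y hy
      rw [hk_def, mem_closedBall]
      calc dist y c ≤ dist y x₀ + dist x₀ c := dist_triangle _ _ _
        _ ≤ r + ρ := add_le_add (mem_closedBall.1 hy) (le_of_lt (mem_ball.1 hx₀mem))
        _ ≤ 2 * ρ := by linarith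
    have hcbΩ : closedBall x₀ r ⊆ Ω := hcb_k.trans hsub
    have hae : ∀ᵐ y ∂volume.restrict (closedBall x₀ r), g' y ≤ (C * r) ^ n * S' y := by
      filter_upwards [ae_restrict_of_ae_restrict_of_subset hcbΩ hSineq,
        ae_restrict_mem measurableSet_closedBall] with y hy hymem
      have hyk : y ∈ k := hcb_k hymem
      rw [hg'_def, hS'_def, indicator_of_mem hyk, indicator_of_mem hyk]
      have hdy : dist y x₀ < δ := lt_of_le_of_lt (mem_closedBall.1 hymem) hrδ
      have h1 : ‖f y - f x₀‖ ≤ C * r := by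
        calc ‖f y - f x₀‖ ≤ C * ‖y - x₀‖ := hδ hdy
          _ ≤ C * r := mul_le_mul_of_nonneg_left
              (by rw [← dist_eq_norm]; exact mem_closedBall.1 hymem) hCnn
      have h2 : ‖f y - f x₀‖ ^ n ≤ (C * r) ^ n :=
        pow_le_pow_left₀ (norm_nonneg _) h1 n
      have h3 : S y * ‖f y - f x₀‖ ^ n ≤ (C * r) ^ n * S y :=
        calc S y * ‖f y - f x₀‖ ^ n ≤ S y * (C * r) ^ n :=
              mul_le_mul_of_nonneg_left h2 (hS0 y)
          _ = (C * r) ^ n * S y := mul_comm _ _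
      have h4 : g y ≤ S y * ‖f y - f x₀‖ ^ n := by
        rw [hg_def]; dsimp only; linarith
      exact h4.trans h3
    have hInt : (∫ y in closedBall x₀ r, g' y)
        ≤ ∫ y in closedBall x₀ r, (C * r) ^ n * S' y :=
      integral_mono_ae hg'.integrableOn ((hS'.const_mul _).integrableOn) hae
    have hvolcb : (volume (closedBall x₀ r)).toReal = r ^ n * vt := by
      rw [Measure.addHaar_closedBall volume x₀ hr.1.le, finrank_euclideanSpace_fin,
        ENNReal.toReal_mul, ENNReal.toReal_ofReal (pow_nonneg hr.1.le n)]
    rw [setAverage_eq, smul_eq_mul, measureReal_def, hvolcb]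
    have hrpow : (0 : ℝ) < r ^ n := pow_pos hr.1 n
    have hconst : ∫ y in closedBall x₀ r, (C * r) ^ n * S' y
        = (C * r) ^ n * ∫ y in closedBall x₀ r, S' y := integral_const_mul _ _
    have hinv : (0 : ℝ) ≤ (r ^ n * vt)⁻¹ := by positivity
    have hstep : (r ^ n * vt)⁻¹ * ∫ y in closedBall x₀ r, g' y
        ≤ (r ^ n * vt)⁻¹ * ((C * r) ^ n * ∫ y in closedBall x₀ r, S' y) := by
      rw [← hconst]
      exact mul_le_mul_of_nonneg_left hInt hinv
    refine hstep.trans (le_of_eq ?_)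
    rw [mul_pow]
    field_simp
  -- conclude via limits
  have hu : Filter.Tendsto (fun r : ℝ => (C ^ n / vt) * ∫ y in closedBall x₀ r, S' y)
      (nhdsWithin 0 (Set.Ioi 0)) (nhds 0) := by
    have := hI.const_mul (C ^ n / vt)
    simpa using this
  have hεmem : Set.Ioc (0 : ℝ) ε ∈ nhdsWithin (0 : ℝ) (Set.Ioi 0) :=
    Ioc_mem_nhdsGT_of_mem ⟨le_refl 0, hεpos⟩
  have hle : g' x₀ ≤ 0 :=
    le_of_tendsto_of_tendsto hx₀leb hu (Filter.eventually_of_mem hεmem hbound)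
  have hx₀k : x₀ ∈ k := hballρ hx₀mem
  rw [hg'_def, indicator_of_mem hx₀k, hg_def] at hle
  dsimp only at hle
  linarith

/-- (Theorem 1.2, main direction.) Let `Ω ⊂ ℝⁿ` be a connected open set, `K ≥ 1`, and
`f ∈ W^{1,n}_loc(Ω, ℝⁿ)` with weak differential `Df`, differentiable a.e. If for every
`y₀ ∈ ℝⁿ` there is a nonnegative `Σ_{y₀} ∈ L¹_loc(Ω)` with
`|Df|ⁿ ≤ K J_f + Σ_{y₀} |f − y₀|ⁿ` a.e. in `Ω`, then `f` is `K`-quasiregular: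
`|Df|ⁿ ≤ K J_f` a.e. in `Ω`. -/
theorem quasiregular_of_quasiregular_values (n : ℕ)
    (Ω : Set (EuclideanSpace ℝ (Fin n))) (hΩo : IsOpen Ω) (hΩc : IsConnected Ω)
    (K : ℝ) (hK : 1 ≤ K)
    (f : EuclideanSpace ℝ (Fin n) → EuclideanSpace ℝ (Fin n))
    (Df : EuclideanSpace ℝ (Fin n) →
      EuclideanSpace ℝ (Fin n) →L[ℝ] EuclideanSpace ℝ (Fin n))
    (hweak : IsWeakFDerivOn Ω f Df)
    (hfloc : LocallyIntegrableOn f Ω volume)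
    (hDfloc : LocallyIntegrableOn (fun x => ‖Df x‖ ^ n) Ω volume)
    (hdiff : ∀ᵐ x ∂volume.restrict Ω, HasFDerivAt f (Df x) x)
    (hall : ∀ y₀ : EuclideanSpace ℝ (Fin n),
      ∃ S : EuclideanSpace ℝ (Fin n) → ℝ, (∀ x, 0 ≤ S x) ∧
        LocallyIntegrableOn S Ω volume ∧
        ∀ᵐ x ∂volume.restrict Ω,
          ‖Df x‖ ^ n ≤ K * (Df x).det + S x * ‖f x - y₀‖ ^ n) :
    ∀ᵐ x ∂volume.restrict Ω, ‖Df x‖ ^ n ≤ K * (Df x).det := by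
  rcases Nat.eq_zero_or_pos n with hn | hn
  · subst hn
    refine Filter.Eventually.of_forall fun x => ?_
    have hdet : (Df x).det = 1 :=
      LinearMap.det_eq_one_of_finrank_eq_zero (by simp) _
    rw [pow_zero, hdet, mul_one]
    exact hK
  · -- cover Ω by countably many good balls
    have hex : ∀ x : Ω, ∃ r > 0, closedBall (x : EuclideanSpace ℝ (Fin n)) (2 * r) ⊆ Ω := by
      rintro ⟨x, hx⟩
      obtain ⟨ε, hεpos, hεsub⟩ := Metric.isOpen_iff.1 hΩo x hx
      refine ⟨ε / 3, by linarith, ?_⟩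
      refine (closedBall_subset_ball ?_).trans hεsub
      linarith
    choose r hrpos hrsub using hex
    have hcover : ⋃ i : Ω, ball (i : EuclideanSpace ℝ (Fin n)) (r i) = Ω := by
      apply subset_antisymm
      · exact iUnion_subset fun i =>
          (ball_subset_closedBall.trans
            (closedBall_subset_closedBall (by linarith [hrpos i]))).trans (hrsub i)
      · intro x hx
        exact mem_iUnion.2 ⟨⟨x, hx⟩, mem_ball_self (hrpos ⟨x, hx⟩)⟩
    obtain ⟨T, hTc, hTU⟩ := TopologicalSpace.isOpen_iUnion_countable
      (fun i : Ω => ball (i : EuclideanSpace ℝ (Fin n)) (r i)) (fun i => isOpen_ball)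
    have hΩeq : Ω = ⋃ i : T, ball ((i : Ω) : EuclideanSpace ℝ (Fin n)) (r i) := by
      rw [iUnion_coe_set]
      exact (hTU.trans hcover).symm
    rw [hΩeq]
    haveI := hTc.to_subtype
    rw [ae_restrict_iUnion_iff]
    rintro ⟨i, hi⟩
    exact key_local hn Ω K f Df hDfloc hdiff hall (i : EuclideanSpace ℝ (Fin n)) (r i)
      (hrpos i) (hrsub i)
end
end

section
/- Let t₀ = 0 and recursively t_{2k-1} = t_{2k-2} + (2^{k-1} − h(t_{2k-2})) and t_{2k} = t_{2k-1} + (2^{k-1} − 2^{-k}), defining a piecewise linear function h : [0,∞) → ℝ with h(0) = 0, slope +1 on each (t_{2k}, t_{2k+1}), slope −1 on each (t_{2k+1}, t_{2k+2}), h(t_{2k-1}) = 2^{k-1}, and h(t_{2k}) = 2^{-k}. Then such a strictly increasing sequence (t_j) exists, h is 1-Lipschitz, h(t) > 0 for all t > 0, and limsup_{t→∞} h(t) = ∞ while liminf_{t→∞} h(t) = 0. -/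
open Set Filter

/-!
Place the prescribed values `v j` at the knots `t j = ∑_{i<j} |v (i+1) - v i|`, so that consecutive
knots are as far apart as consecutive values and joining them by segments gives slopes `±1`.
This zigzag is the infimum of the cones `s ↦ v j + |s - t j|`, which makes it 1-Lipschitz at once.
Since `|v j - v i| ≤ |t j - t i|`, on `[t i, t (i+1)]` only the cones at `t i` and `t (i+1)` matter,
which recovers the linear pieces. With peaks `2^k` and valleys `2^{-k}` the values are unbounded and
the knots tend to infinity, so the peaks and valleys give the `limsup` and the `liminf`.
-/

namespace UnitSpeed

variable (v : ℕ → ℝ)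

def knot (j : ℕ) : ℝ := ∑ i ∈ Finset.range j, |v (i + 1) - v i|

noncomputable def interp (s : ℝ) : ℝ := ⨅ j, v j + |s - knot v j|

@[simp] lemma knot_zero : knot v 0 = 0 := Finset.sum_range_zero _

lemma knot_succ (j : ℕ) : knot v (j + 1) = knot v j + |v (j + 1) - v j| :=
  Finset.sum_range_succ _ _

lemma monotone_knot : Monotone (knot v) :=
  monotone_nat_of_le_succ fun j => by rw [knot_succ]; exact le_add_of_nonneg_right (abs_nonneg _)

variable {v} in
lemma strictMono_knot (hv : ∀ j, v (j + 1) ≠ v j) : StrictMono (knot v) :=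
  strictMono_nat_of_lt_succ fun j => by
    rw [knot_succ]; exact lt_add_of_pos_right _ (abs_pos.2 (sub_ne_zero.2 (hv j)))

lemma abs_sub_le_knot_sub {i j : ℕ} (hij : i ≤ j) : |v j - v i| ≤ knot v j - knot v i := by
  induction j, hij using Nat.le_induction with
  | base => simp
  | succ j _ ih =>
    rw [knot_succ]
    linarith [abs_sub_le (v (j + 1)) (v j) (v i)]

lemma tendsto_knot_atTop (hv : ¬BddAbove (range v)) : Tendsto (knot v) atTop atTop := by
  refine tendsto_atTop_atTop_of_monotone (monotone_knot v) fun b => ?_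
  obtain ⟨_, ⟨j, rfl⟩, hj⟩ := not_bddAbove_iff.1 hv (b + v 0)
  refine ⟨j, ?_⟩
  linarith [le_abs_self (v j - v 0), abs_sub_le_knot_sub v (Nat.zero_le j), knot_zero v]

lemma cone_le_cone_of_le {i j : ℕ} {s : ℝ} (hji : j ≤ i) (hs : knot v i ≤ s) :
    v i + |s - knot v i| ≤ v j + |s - knot v j| := by
  have := abs_sub_le_knot_sub v hji
  rw [abs_of_nonneg (sub_nonneg.2 hs), abs_of_nonneg (by linarith [monotone_knot v hji])]
  linarith [le_abs_self (v i - v j)]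

lemma cone_le_cone_of_ge {i j : ℕ} {s : ℝ} (hij : i ≤ j) (hs : s ≤ knot v i) :
    v i + |s - knot v i| ≤ v j + |s - knot v j| := by
  have := abs_sub_le_knot_sub v hij
  rw [abs_of_nonpos (sub_nonpos.2 hs), abs_of_nonpos (by linarith [monotone_knot v hij])]
  linarith [neg_abs_le (v j - v i)]

lemma bddBelow_cones (s : ℝ) : BddBelow (range fun j => v j + |s - knot v j|) := by
  refine ⟨v 0 - s, forall_mem_range.2 fun j => ?_⟩
  have := abs_sub_le_knot_sub v (Nat.zero_le j)
  rw [knot_zero] at this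
  linarith [neg_abs_le (v j - v 0), le_abs_self (s - knot v j), neg_abs_le (s - knot v j)]

lemma interp_le_cone (s : ℝ) (j : ℕ) : interp v s ≤ v j + |s - knot v j| :=
  ciInf_le (bddBelow_cones v s) j

lemma lipschitzWith_interp : LipschitzWith 1 (interp v) :=
  LipschitzWith.of_le_add fun x y => by
    rw [← sub_le_iff_le_add]
    refine le_ciInf fun j => sub_le_iff_le_add.2 ?_
    rw [Real.dist_eq]
    linarith [interp_le_cone v x j, abs_sub_le x y (knot v j)]

lemma interp_knot (i : ℕ) : interp v (knot v i) = v i := by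
  refine le_antisymm (by simpa using interp_le_cone v (knot v i) i) (le_ciInf fun j => ?_)
  rcases le_total j i with hji | hij
  · simpa using cone_le_cone_of_le v hji le_rfl
  · simpa using cone_le_cone_of_ge v hij le_rfl

lemma interp_eq_min {i : ℕ} {s : ℝ} (hs : s ∈ Icc (knot v i) (knot v (i + 1))) :
    interp v s = min (v i + (s - knot v i)) (v (i + 1) + (knot v (i + 1) - s)) := by
  have hi : |s - knot v i| = s - knot v i := abs_of_nonneg (sub_nonneg.2 hs.1)
  have hi' : |s - knot v (i + 1)| = knot v (i + 1) - s := by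
    rw [abs_sub_comm]; exact abs_of_nonneg (sub_nonneg.2 hs.2)
  refine le_antisymm (le_min ?_ ?_) (le_ciInf fun j => ?_)
  · simpa [hi] using interp_le_cone v s i
  · simpa [hi'] using interp_le_cone v s (i + 1)
  rcases le_or_gt j i with hji | hij
  · exact (min_le_left _ _).trans (hi ▸ cone_le_cone_of_le v hji hs.1)
  · exact (min_le_right _ _).trans (hi' ▸ cone_le_cone_of_ge v hij hs.2)

lemma interp_eq_of_le {i : ℕ} {s : ℝ} (hv : v i ≤ v (i + 1))
    (hs : s ∈ Icc (knot v i) (knot v (i + 1))) : interp v s = v i + (s - knot v i) := by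
  have hk : knot v (i + 1) = knot v i + (v (i + 1) - v i) := by
    rw [knot_succ, abs_of_nonneg (sub_nonneg.2 hv)]
  rw [interp_eq_min v hs, min_eq_left]
  linarith [hs.2]

lemma interp_eq_of_ge {i : ℕ} {s : ℝ} (hv : v (i + 1) ≤ v i)
    (hs : s ∈ Icc (knot v i) (knot v (i + 1))) : interp v s = v i - (s - knot v i) := by
  have hk : knot v (i + 1) = knot v i + (v i - v (i + 1)) := by
    rw [knot_succ, abs_of_nonpos (sub_nonpos.2 hv), neg_sub]
  rw [interp_eq_min v hs, min_eq_right] <;> linarith [hs.1]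

variable {v}

lemma exists_mem_Icc_knot (hv : ¬BddAbove (range v)) {s : ℝ} (hs : 0 ≤ s) :
    ∃ i, s ∈ Icc (knot v i) (knot v (i + 1)) := by
  obtain ⟨N, hN⟩ := ((tendsto_knot_atTop v hv).eventually_gt_atTop s).exists
  have := Ico_subset_biUnion_Ico N (knot v) ⟨by rwa [knot_zero], hN⟩
  simp only [mem_iUnion, Finset.mem_range] at this
  obtain ⟨i, -, hi⟩ := this
  exact ⟨i, Ico_subset_Icc_self hi⟩

lemma interp_pos (hv : ¬BddAbove (range v)) (h0 : 0 ≤ v 0) (hpos : ∀ j, 0 < v (j + 1))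
    {s : ℝ} (hs : 0 < s) : 0 < interp v s := by
  obtain ⟨i, hi⟩ := exists_mem_Icc_knot hv hs.le
  rw [interp_eq_min v hi]
  refine lt_min ?_ (by linarith [hpos i, hi.2])
  cases i with
  | zero => rw [knot_zero]; linarith
  | succ i => linarith [hpos i, hi.1]

lemma frequently_interp_of_eventually (hv : ¬BddAbove (range v)) {p : ℝ → Prop} {φ : ℕ → ℕ}
    (hφ : Tendsto φ atTop atTop) (h : ∀ᶠ k in atTop, p (v (φ k))) :
    ∃ᶠ s in atTop, p (interp v s) :=
  ((tendsto_knot_atTop v hv).comp hφ).frequently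
    (h.mono fun k hk => by rwa [Function.comp_apply, interp_knot]).frequently

end UnitSpeed

noncomputable def zigzagValue (j : ℕ) : ℝ :=
  if j = 0 then 0 else if Even j then (2 : ℝ)⁻¹ ^ (j / 2) else 2 ^ (j / 2)

lemma zigzagValue_zero : zigzagValue 0 = 0 := if_pos rfl

lemma zigzagValue_odd (k : ℕ) : zigzagValue (2 * k + 1) = 2 ^ k := by
  have hk : (2 * k + 1) / 2 = k := by omega
  simp [zigzagValue, hk]

lemma zigzagValue_even {k : ℕ} (hk : k ≠ 0) : zigzagValue (2 * k) = (2 : ℝ)⁻¹ ^ k := by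
  simp [zigzagValue, hk]

lemma zigzagValue_even_lt_odd (k m : ℕ) : zigzagValue (2 * k) < zigzagValue (2 * m + 1) := by
  have hvalley : zigzagValue (2 * k) ≤ 2⁻¹ := by
    rcases eq_or_ne k 0 with rfl | hk
    · norm_num [zigzagValue_zero]
    · rw [zigzagValue_even hk]; exact pow_le_of_le_one (by norm_num) (by norm_num) hk
  have hpeak : (1 : ℝ) ≤ zigzagValue (2 * m + 1) := by
    rw [zigzagValue_odd]; exact one_le_pow₀ one_le_two
  linarith

lemma zigzagValue_succ_ne (j : ℕ) : zigzagValue (j + 1) ≠ zigzagValue j := by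
  obtain ⟨k, rfl | rfl⟩ := Nat.even_or_odd' j
  · exact (zigzagValue_even_lt_odd k k).ne'
  · exact (zigzagValue_even_lt_odd (k + 1) k).ne

lemma zigzagValue_succ_pos (j : ℕ) : 0 < zigzagValue (j + 1) := by
  simp only [zigzagValue, Nat.succ_ne_zero, if_false]
  split_ifs <;> positivity

lemma not_bddAbove_range_zigzagValue : ¬BddAbove (range zigzagValue) := by
  refine not_bddAbove_iff.2 fun M => ?_
  obtain ⟨k, hk⟩ := pow_unbounded_of_one_lt M one_lt_two
  exact ⟨_, ⟨2 * k + 1, rfl⟩, by rwa [zigzagValue_odd]⟩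

open UnitSpeed in
/-- Example 7.4: there is a strictly increasing sequence `t₀ = 0 < t₁ < t₂ < ⋯` and a
piecewise linear function `h : [0,∞) → ℝ` with `h(0) = 0`, slope `+1` on each
`(t_{2k}, t_{2k+1})` and slope `−1` on each `(t_{2k+1}, t_{2k+2})`, peaks
`h(t_{2k+1}) = 2^k` and valleys `h(t_{2k}) = 2^{−k}` (for `k ≥ 1`); `h` is
1-Lipschitz on `[0,∞)`, positive on `(0,∞)`, and `limsup_{t→∞} h(t) = ∞` while
`liminf_{t→∞} h(t) = 0`. -/
theorem zigzag_function_exists :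
    ∃ t : ℕ → ℝ, StrictMono t ∧ t 0 = 0 ∧
      ∃ h : ℝ → ℝ, h 0 = 0 ∧ LipschitzOnWith 1 h (Ici 0) ∧
        (∀ k : ℕ, h (t (2 * k + 1)) = 2 ^ k) ∧
        (∀ k : ℕ, 1 ≤ k → h (t (2 * k)) = (2 : ℝ)⁻¹ ^ k) ∧
        (∀ k : ℕ, ∀ s ∈ Icc (t (2 * k)) (t (2 * k + 1)),
          h s = h (t (2 * k)) + (s - t (2 * k))) ∧
        (∀ k : ℕ, ∀ s ∈ Icc (t (2 * k + 1)) (t (2 * k + 2)),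
          h s = h (t (2 * k + 1)) - (s - t (2 * k + 1))) ∧
        (∀ s : ℝ, 0 < s → 0 < h s) ∧
        (∀ M : ℝ, ∃ᶠ s in atTop, M < h s) ∧
        (∀ ε : ℝ, 0 < ε → ∃ᶠ s in atTop, h s < ε) := by
  have hv := not_bddAbove_range_zigzagValue
  refine ⟨knot zigzagValue, strictMono_knot zigzagValue_succ_ne, knot_zero _, interp zigzagValue,
    ?_, (lipschitzWith_interp _).lipschitzOnWith, fun k => ?_, fun k hk => ?_, fun k s hs => ?_,
    fun k s hs => ?_, fun s => interp_pos hv zigzagValue_zero.ge zigzagValue_succ_pos,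
    fun M => ?_, fun ε hε => ?_⟩
  · simpa [zigzagValue_zero] using interp_knot zigzagValue 0
  · rw [interp_knot, zigzagValue_odd]
  · rw [interp_knot, zigzagValue_even (by omega)]
  · rw [interp_knot, interp_eq_of_le _ (zigzagValue_even_lt_odd k k).le hs]
  · rw [interp_knot]
    exact interp_eq_of_ge _ (zigzagValue_even_lt_odd (k + 1) k).le hs
  · refine frequently_interp_of_eventually hv (φ := fun k => 2 * k + 1)
      (tendsto_atTop_mono (fun k => show k ≤ _ by omega) tendsto_id) ?_
    filter_upwards [(tendsto_pow_atTop_atTop_of_one_lt one_lt_two).eventually_gt_atTop M]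
      with k hk
    rwa [zigzagValue_odd]
  · refine frequently_interp_of_eventually hv (p := (· < ε)) (φ := fun k => 2 * k)
      (tendsto_atTop_mono (fun k => show k ≤ _ by omega) tendsto_id) ?_
    filter_upwards [eventually_ne_atTop 0, (tendsto_pow_atTop_nhds_zero_of_lt_one
      (by norm_num) (by norm_num : (2 : ℝ)⁻¹ < 1)).eventually (gt_mem_nhds hε)] with k hk hsmall
    rwa [zigzagValue_even hk]
end

section
/- Suppose g : U → [0, ∞) is measurable on an open set U ⊂ ℝⁿ, ε > 0, and for almost every r ∈ (0, ε) we have ∫_{U_r} P = ∫_{U_r} N, where U_r = {x ∈ U : φ(x) < r} for a measurable φ : U → [0, ε), and P, N : U → [0, ∞) are integrable with ∫_U P < ∞ or ∫_U N < ∞. If additionally ∫_U N/φⁿ < ∞ and ∫_U P dx < ∞, then ∫_U P/φⁿ = ∫_U N/φⁿ, where both sides may a priori be infinite. (Multiplying the level-set identity by n r^{−n−1}, integrating over r ∈ (0, ε), and applying Fubini–Tonelli yields ∫_U P (φ^{−n} − ε^{−n}) = ∫_U N (φ^{−n} − ε^{−n}).) -/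
open MeasureTheory Set Filter Topology
open scoped ENNReal

/-!
For `0 ≤ a < ε` one has `a⁻ⁿ = ∫_a^ε n r⁻ⁿ⁻¹ dr + ε⁻ⁿ` in `[0, ∞]` (for `n ≥ 1` both sides are
`∞` at `a = 0`), so by Tonelli, for every `h ≥ 0`,
`∫_U h / φⁿ = ∫_0^ε n r⁻ⁿ⁻¹ (∫_{U_r} h) dr + ε⁻ⁿ ∫_U h`.
For `h = P` and `h = N` the inner integrals agree for a.e. `r`. The total integrals agree as
well: `∫_{U_r} → ∫_U` as `r → ε⁻` by dominated convergence, and the levels where the identity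
holds accumulate at `ε`.
-/

theorem setLIntegral_Ioo_natCast_mul_inv_pow_succ {a b : ℝ} (ha : 0 < a) (hab : a ≤ b) (n : ℕ) :
    ∫⁻ r in Ioo a b, n * (ENNReal.ofReal r ^ (n + 1))⁻¹
      = ENNReal.ofReal ((a ^ n)⁻¹ - (b ^ n)⁻¹) := by
  set k : ℝ → ℝ := fun r => n * r ^ (-(n : ℤ) - 1)
  have hpos : ∀ r ∈ uIcc a b, 0 < r := fun r hr => ha.trans_le (by simpa [hab] using hr.1)
  have hk : ∀ r ∈ Ioo a b, n * (ENNReal.ofReal r ^ (n + 1))⁻¹ = ENNReal.ofReal (k r) := by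
    intro r hr
    have hr0 : 0 < r := ha.trans hr.1
    rw [ENNReal.ofReal_mul (by positivity), ENNReal.ofReal_natCast, ← ENNReal.ofReal_pow hr0.le,
      ← ENNReal.ofReal_inv_of_pos (by positivity), show -(n : ℤ) - 1 = -((n + 1 : ℕ) : ℤ) by omega,
      zpow_neg, zpow_natCast]
  have hderiv : ∀ r ∈ uIcc a b, HasDerivAt (-fun r => r ^ (-(n : ℤ))) (k r) r := by
    intro r hr
    have := (hasDerivAt_zpow (-(n : ℤ)) r (Or.inl (hpos r hr).ne')).neg
    simpa only [Int.cast_neg, Int.cast_natCast, neg_mul, neg_neg] using this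
  have hint : IntervalIntegrable k volume a b :=
    (continuousOn_const.mul
      (continuousOn_id.zpow₀ _ fun r hr => Or.inl (hpos r hr).ne')).intervalIntegrable
  rw [setLIntegral_congr_fun measurableSet_Ioo hk, ← ofReal_integral_eq_lintegral_ofReal
      (hint.1.mono_set Ioo_subset_Ioc_self)
      (ae_restrict_of_forall_mem measurableSet_Ioo fun r hr => by
        have := ha.trans hr.1; positivity),
    ← integral_Ioc_eq_integral_Ioo, ← intervalIntegral.integral_of_le hab,
    intervalIntegral.integral_eq_sub_of_hasDerivAt hderiv hint]
  simp [zpow_neg, neg_add_eq_sub]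

theorem setLIntegral_Ioo_zero_natCast_mul_inv_pow_succ {b : ℝ} (hb : 0 < b) {n : ℕ} (hn : n ≠ 0) :
    ∫⁻ r in Ioo 0 b, n * (ENNReal.ofReal r ^ (n + 1))⁻¹ = ⊤ := by
  have hlim : Tendsto (fun a : ℝ => ENNReal.ofReal ((a ^ n)⁻¹ - (b ^ n)⁻¹)) (𝓝[>] 0) (𝓝 ⊤) := by
    refine ENNReal.tendsto_ofReal_atTop.comp (tendsto_atTop_add_const_right _ _ ?_)
    simpa only [Function.comp_def, inv_pow] using
      (tendsto_pow_atTop (α := ℝ) hn).comp tendsto_inv_nhdsGT_zero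
  refine top_le_iff.mp (le_of_tendsto hlim ?_)
  filter_upwards [Ioo_mem_nhdsGT hb] with a ha
  rw [← setLIntegral_Ioo_natCast_mul_inv_pow_succ ha.1 ha.2.le]
  exact lintegral_mono_set (Ioo_subset_Ioo_left ha.1.le)

theorem inv_ofReal_pow_eq_setLIntegral_Ioo_add {a b : ℝ} (ha : 0 ≤ a) (hab : a < b) (n : ℕ) :
    (ENNReal.ofReal a ^ n)⁻¹
      = (∫⁻ r in Ioo a b, n * (ENNReal.ofReal r ^ (n + 1))⁻¹) + (ENNReal.ofReal b ^ n)⁻¹ := by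
  rcases eq_or_ne n 0 with rfl | hn
  · simp
  rcases ha.eq_or_lt with rfl | ha
  · simp [setLIntegral_Ioo_zero_natCast_mul_inv_pow_succ hab hn, hn]
  have hb := ha.trans hab
  rw [setLIntegral_Ioo_natCast_mul_inv_pow_succ ha hab.le, ← ENNReal.ofReal_pow hb.le,
    ← ENNReal.ofReal_inv_of_pos (by positivity), ← ENNReal.ofReal_add _ (by positivity),
    sub_add_cancel, ENNReal.ofReal_inv_of_pos (by positivity), ENNReal.ofReal_pow ha.le]
  exact sub_nonneg.mpr (inv_anti₀ (by positivity) (pow_le_pow_left₀ ha.le hab.le n))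

theorem frequently_nhdsLT_of_ae_restrict_Ioo {p : ℝ → Prop} {a b : ℝ} (hab : a < b)
    (h : ∀ᵐ r ∂volume.restrict (Ioo a b), p r) : ∃ᶠ r in 𝓝[<] b, p r := by
  rw [(nhdsLT_basis b).frequently_iff]
  intro c hc
  have hsub : Ioo (max a c) b ⊆ Ioo a b := Ioo_subset_Ioo_left (le_max_left a c)
  have : (ae (volume.restrict (Ioo (max a c) b))).NeBot := by
    rw [ae_restrict_neBot, Real.volume_Ioo]
    simpa using max_lt hab hc
  obtain ⟨r, hr, hpr⟩ := ((ae_restrict_of_ae_restrict_of_subset hsub h).and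
    (ae_restrict_mem measurableSet_Ioo)).exists
  exact ⟨r, Ioo_subset_Ioo_left (le_max_right a c) hpr, hr⟩

section Sublevel

variable {α E : Type*} [MeasurableSpace α] {μ : Measure α}
  [NormedAddCommGroup E] [NormedSpace ℝ E] {U : Set α} {φ : α → ℝ} {ε : ℝ}

theorem tendsto_setIntegral_sublevel_nhdsLT (hU : MeasurableSet U) (hφm : Measurable φ)
    (hφ : ∀ x ∈ U, φ x < ε) {f : α → E} (hf : IntegrableOn f U μ) :
    Tendsto (fun r => ∫ x in {x ∈ U | φ x < r}, f x ∂μ) (𝓝[<] ε)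
      (𝓝 (∫ x in U, f x ∂μ)) := by
  have hsub : ∀ r, MeasurableSet {x | φ x < r} := fun r => measurableSet_lt hφm measurable_const
  have hrestrict : ∀ r, ∫ x in {x ∈ U | φ x < r}, f x ∂μ
      = ∫ x in U, {x | φ x < r}.indicator f x ∂μ := fun r => by
    rw [integral_indicator (hsub r), Measure.restrict_restrict (hsub r), inter_comm]; rfl
  simp only [hrestrict]
  refine tendsto_integral_filter_of_dominated_convergence (fun x => ‖f x‖)
    (Eventually.of_forall fun r => hf.aestronglyMeasurable.indicator (hsub r))
    (Eventually.of_forall fun r => Eventually.of_forall fun x => norm_indicator_le_norm_self _ _)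
    hf.norm ?_
  filter_upwards [ae_restrict_mem hU] with x hx
  refine tendsto_const_nhds.congr' ?_
  filter_upwards [Ioo_mem_nhdsLT (hφ x hx)] with r hr
  exact (indicator_of_mem (show x ∈ {x | φ x < r} from hr.1) f).symm

theorem setIntegral_eq_of_ae_setIntegral_sublevel_eq (hU : MeasurableSet U)
    (hφm : Measurable φ) (hφ : ∀ x ∈ U, φ x < ε) {a : ℝ} (ha : a < ε) {f g : α → E}
    (hf : IntegrableOn f U μ) (hg : IntegrableOn g U μ)
    (hlevel : ∀ᵐ r ∂volume.restrict (Ioo a ε),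
      ∫ x in {x ∈ U | φ x < r}, f x ∂μ = ∫ x in {x ∈ U | φ x < r}, g x ∂μ) :
    ∫ x in U, f x ∂μ = ∫ x in U, g x ∂μ :=
  tendsto_nhds_unique_of_frequently_eq (tendsto_setIntegral_sublevel_nhdsLT hU hφm hφ hf)
    (tendsto_setIntegral_sublevel_nhdsLT hU hφm hφ hg)
    (frequently_nhdsLT_of_ae_restrict_Ioo ha hlevel)

theorem setLIntegral_mul_setLIntegral_Ioo_eq [SFinite μ] (hU : MeasurableSet U)
    (hφm : Measurable φ) (hφ0 : ∀ x ∈ U, 0 ≤ φ x) {h : α → ℝ≥0∞} (hh : Measurable h)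
    {k : ℝ → ℝ≥0∞} (hk : Measurable k) :
    ∫⁻ x in U, h x * (∫⁻ r in Ioo (φ x) ε, k r) ∂μ
      = ∫⁻ r in Ioo 0 ε, k r * ∫⁻ x in {x ∈ U | φ x < r}, h x ∂μ := by
  set F : α → ℝ → ℝ≥0∞ := fun x r => if φ x < r then k r * h x else 0
  have hF : Measurable (Function.uncurry F) :=
    Measurable.ite (measurableSet_lt (hφm.comp measurable_fst) measurable_snd)
      ((hk.comp measurable_snd).mul (hh.comp measurable_fst)) measurable_const
  have hx : ∀ x ∈ U, h x * ∫⁻ r in Ioo (φ x) ε, k r = ∫⁻ r in Ioo 0 ε, F x r := by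
    intro x hx
    have hIoo : Ioi (φ x) ∩ Ioo 0 ε = Ioo (φ x) ε := by
      rw [Ioi_inter_Ioo, max_eq_left (hφ0 x hx)]
    have hF : ∀ r, F x r = (Ioi (φ x)).indicator (fun r => k r * h x) r := fun r => by
      simp only [F, indicator_apply, mem_Ioi]
    rw [lintegral_congr hF, lintegral_indicator measurableSet_Ioi,
      Measure.restrict_restrict measurableSet_Ioi, hIoo, lintegral_mul_const _ hk, mul_comm]
  have hr : ∀ r, ∫⁻ x in U, F x r ∂μ = k r * ∫⁻ x in {x ∈ U | φ x < r}, h x ∂μ := by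
    intro r
    have hlt : MeasurableSet {x | φ x < r} := measurableSet_lt hφm measurable_const
    have hF : ∀ x, F x r = {x | φ x < r}.indicator (fun x => k r * h x) x := fun x => by
      simp only [F, indicator_apply, mem_ofPred_eq]
    rw [lintegral_congr hF, lintegral_indicator hlt, Measure.restrict_restrict hlt, inter_comm,
      lintegral_const_mul _ hh]
    rfl
  rw [setLIntegral_congr_fun hU hx, lintegral_lintegral_swap hF.aemeasurable]
  exact lintegral_congr fun r => hr r

theorem setLIntegral_div_pow_eq [SFinite μ] (hU : MeasurableSet U) (hφm : Measurable φ)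
    (hφ : ∀ x ∈ U, φ x ∈ Ico 0 ε) {h : α → ℝ≥0∞} (hh : Measurable h) (n : ℕ) :
    ∫⁻ x in U, h x / ENNReal.ofReal (φ x) ^ n ∂μ
      = (∫⁻ r in Ioo 0 ε, n * (ENNReal.ofReal r ^ (n + 1))⁻¹
          * ∫⁻ x in {x ∈ U | φ x < r}, h x ∂μ)
        + (ENNReal.ofReal ε ^ n)⁻¹ * ∫⁻ x in U, h x ∂μ := by
  have hk : Measurable fun r : ℝ => (n : ℝ≥0∞) * (ENNReal.ofReal r ^ (n + 1))⁻¹ := by fun_prop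
  calc ∫⁻ x in U, h x / ENNReal.ofReal (φ x) ^ n ∂μ
      = ∫⁻ x in U, h x * (∫⁻ r in Ioo (φ x) ε, n * (ENNReal.ofReal r ^ (n + 1))⁻¹)
          + (ENNReal.ofReal ε ^ n)⁻¹ * h x ∂μ :=
        setLIntegral_congr_fun hU fun x hx => by
          rw [div_eq_mul_inv, inv_ofReal_pow_eq_setLIntegral_Ioo_add (hφ x hx).1 (hφ x hx).2,
            mul_add, mul_comm (h x) (ENNReal.ofReal ε ^ n)⁻¹]
    _ = _ := by
        rw [lintegral_add_right _ (hh.const_mul _), lintegral_const_mul _ hh,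
          setLIntegral_mul_setLIntegral_Ioo_eq hU hφm (fun x hx => (hφ x hx).1) hh hk]

theorem ofReal_setIntegral_eq_setLIntegral {f : α → ℝ} {S : Set α} (hS : MeasurableSet S)
    (hf : IntegrableOn f S μ) (hf0 : ∀ x ∈ S, 0 ≤ f x) :
    ENNReal.ofReal (∫ x in S, f x ∂μ) = ∫⁻ x in S, ENNReal.ofReal (f x) ∂μ :=
  ofReal_integral_eq_lintegral_ofReal hf (ae_restrict_of_forall_mem hS hf0)

end Sublevel

theorem layer_cake_identity_general (n : ℕ)
    (U : Set (EuclideanSpace ℝ (Fin n))) (hUo : IsOpen U) (ε : ℝ) (hε : 0 < ε)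
    (φ : EuclideanSpace ℝ (Fin n) → ℝ) (hφm : Measurable φ)
    (hφ : ∀ x ∈ U, φ x ∈ Ico 0 ε)
    (P N : EuclideanSpace ℝ (Fin n) → ℝ)
    (hPm : Measurable P) (hNm : Measurable N)
    (hP0 : ∀ x ∈ U, 0 ≤ P x) (hN0 : ∀ x ∈ U, 0 ≤ N x)
    (hPint : IntegrableOn P U volume) (hNint : IntegrableOn N U volume)
    (hlevel : ∀ᵐ r ∂volume.restrict (Ioo 0 ε),
      ∫ x in {x ∈ U | φ x < r}, P x = ∫ x in {x ∈ U | φ x < r}, N x) :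
    ∫⁻ x in U, ENNReal.ofReal (P x) / ENNReal.ofReal (φ x) ^ n =
      ∫⁻ x in U, ENNReal.ofReal (N x) / ENNReal.ofReal (φ x) ^ n := by
  have hU : MeasurableSet U := hUo.measurableSet
  have hsub : ∀ r, MeasurableSet {x ∈ U | φ x < r} := fun r => hU.inter (hφm measurableSet_Iio)
  have hsublevel : ∀ f, IntegrableOn f U → (∀ x ∈ U, 0 ≤ f x) → ∀ r,
      ∫⁻ x in {x ∈ U | φ x < r}, ENNReal.ofReal (f x)
        = ENNReal.ofReal (∫ x in {x ∈ U | φ x < r}, f x) := fun f hf hf0 r =>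
    (ofReal_setIntegral_eq_setLIntegral (hsub r) (hf.mono_set (sep_subset _ _))
      fun x hx => hf0 x hx.1).symm
  have htotal : ∫ x in U, P x = ∫ x in U, N x :=
    setIntegral_eq_of_ae_setIntegral_sublevel_eq hU hφm (fun x hx => (hφ x hx).2) hε
      hPint hNint hlevel
  rw [setLIntegral_div_pow_eq hU hφm hφ hPm.ennreal_ofReal,
    setLIntegral_div_pow_eq hU hφm hφ hNm.ennreal_ofReal,
    ← ofReal_setIntegral_eq_setLIntegral hU hPint hP0,
    ← ofReal_setIntegral_eq_setLIntegral hU hNint hN0, htotal]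
  congr 1
  refine lintegral_congr_ae ?_
  filter_upwards [hlevel] with r hr
  rw [hsublevel P hPint hP0, hsublevel N hNint hN0, hr]

/-- Layer-cake/Fubini identity (from Lemma 4.3): suppose `U ⊂ ℝⁿ` is open,
`φ : U → [0, ε)` is measurable, `P, N ≥ 0` are integrable on `U`, and for a.e.
`r ∈ (0, ε)` the level-set identity `∫_{U_r} P = ∫_{U_r} N` holds, where
`U_r = {x ∈ U : φ(x) < r}`. If moreover `∫_U N/φⁿ < ∞`, then
`∫_U P/φⁿ = ∫_U N/φⁿ` (both sides a priori possibly infinite, computed in `[0,∞]`). -/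
theorem layer_cake_identity (n : ℕ)
    (U : Set (EuclideanSpace ℝ (Fin n))) (hUo : IsOpen U) (ε : ℝ) (hε : 0 < ε)
    (g : EuclideanSpace ℝ (Fin n) → ℝ) (hgm : Measurable g)
    (hg0 : ∀ x ∈ U, 0 ≤ g x)
    (φ : EuclideanSpace ℝ (Fin n) → ℝ) (hφm : Measurable φ)
    (hφ : ∀ x ∈ U, φ x ∈ Ico 0 ε)
    (P N : EuclideanSpace ℝ (Fin n) → ℝ)
    (hPm : Measurable P) (hNm : Measurable N)
    (hP0 : ∀ x ∈ U, 0 ≤ P x) (hN0 : ∀ x ∈ U, 0 ≤ N x)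
    (hPint : IntegrableOn P U volume) (hNint : IntegrableOn N U volume)
    (hlevel : ∀ᵐ r ∂volume.restrict (Ioo 0 ε),
      ∫ x in {x ∈ U | φ x < r}, P x = ∫ x in {x ∈ U | φ x < r}, N x)
    (hNφ : ∫⁻ x in U, ENNReal.ofReal (N x) / ENNReal.ofReal (φ x) ^ n ≠ ⊤) :
    ∫⁻ x in U, ENNReal.ofReal (P x) / ENNReal.ofReal (φ x) ^ n =
      ∫⁻ x in U, ENNReal.ofReal (N x) / ENNReal.ofReal (φ x) ^ n :=
  layer_cake_identity_general n U hUo ε hε φ hφm hφ P N hPm hNm hP0 hN0 hPint hNint hlevel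
end
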